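/- If f_n : [0,T] → [0,∞) are measurable functions bounded uniformly by an integrable function, and lim sup_n f_n(t) ≤ C ∫_0^t (t−s)^{-κ} lim sup_n f_n(s) ds for all t ∈ [0,T] with κ ∈ (0,1) and C > 0, then lim sup_n f_n(t) = 0 for all t ∈ [0,T]. -/

import Mathlib

/-!
Bielecki's weighted-norm argument. The limsup `g` is measurable with `0 ≤ g ≤ φ`, so
`W = ∫₀ᵀ e^{-rt} g(t) dt` is finite. Multiplying the inequality by
`e^{-rt} = e^{-r(t-s)} e^{-rs}`, integrating over `t` and exchanging the order of integration gives
`W ≤ C (∫₀^∞ e^{-ru} u^{-κ} du) W = C Γ(1-κ) r^{κ-1} W`, and this factor is `< 1` for large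
`r`. Hence `W = 0`, so `g = 0` a.e.; then the right-hand side of the inequality vanishes and
`g = 0` everywhere on `[0, T]`. Working in `ℝ≥0∞` avoids all integrability side conditions.
-/

open Filter MeasureTheory Set
open scoped ENNReal

theorem ENNReal.eq_zero_of_le_mul_of_lt_one {a q : ℝ≥0∞} (h : a ≤ q * a) (hq : q < 1)
    (ha : a ≠ ∞) : a = 0 := by
  by_contra ha0
  have : q * a < 1 * a := ENNReal.mul_lt_mul_left ha0 ha hq
  rw [one_mul] at this
  exact (h.trans_lt this).false

theorem ofReal_integral_le_lintegral_ofReal {α : Type*} [MeasurableSpace α] {μ : Measure α}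
    (f : α → ℝ) :
    ENNReal.ofReal (∫ x, f x ∂μ) ≤ ∫⁻ x, ENNReal.ofReal (f x) ∂μ := by
  by_cases hf : Integrable f μ
  · calc ENNReal.ofReal (∫ x, f x ∂μ) ≤ ENNReal.ofReal (∫ x, max (f x) 0 ∂μ) :=
          ENNReal.ofReal_le_ofReal (integral_mono hf hf.pos_part fun x => le_max_left _ _)
      _ = ∫⁻ x, ENNReal.ofReal (max (f x) 0) ∂μ :=
          ofReal_integral_eq_lintegral_ofReal hf.pos_part (ae_of_all _ fun x => le_max_right _ _)
      _ = ∫⁻ x, ENNReal.ofReal (f x) ∂μ := by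
          simp_rw [ENNReal.ofReal_max, ENNReal.ofReal_zero, max_zero]
  · simp [integral_undef hf]

theorem limsup_mem_Icc_of_forall_mem_Icc {ι α : Type*} [ConditionallyCompleteLinearOrder α]
    {l : Filter ι} [l.NeBot] {u : ι → α} {a b : α} (hu : ∀ i, u i ∈ Icc a b) :
    limsup u l ∈ Icc a b :=
  have h_above : IsBoundedUnder (· ≤ ·) l u := isBoundedUnder_of ⟨b, fun i => (hu i).2⟩
  have h_below : IsBoundedUnder (· ≥ ·) l u := isBoundedUnder_of ⟨a, fun i => (hu i).1⟩
  ⟨le_limsup_of_frequently_le (Frequently.of_forall fun i => (hu i).1) h_above,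
    limsup_le_of_le h_below.isCoboundedUnder_le (Eventually.of_forall fun i => (hu i).2)⟩

theorem lintegral_Ioc_lintegral_Ioc_swap (a b : ℝ) {F : ℝ → ℝ → ℝ≥0∞}
    (hF : Measurable (Function.uncurry F)) :
    ∫⁻ t in Ioc a b, ∫⁻ s in Ioc a t, F t s =
      ∫⁻ s in Ioc a b, ∫⁻ t in Icc s b, F t s := by
  set R : Set (ℝ × ℝ) := {p | a < p.2 ∧ p.2 ≤ p.1 ∧ p.1 ≤ b}
  have hR : MeasurableSet R :=
    (measurableSet_lt measurable_const measurable_snd).inter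
      ((measurableSet_le measurable_snd measurable_fst).inter
        (measurableSet_le measurable_fst measurable_const))
  have h_fst : ∀ t s, R.indicator (Function.uncurry F) (t, s)
      = (Ioc a b).indicator (fun t => (Ioc a t).indicator (F t) s) t := by
    intro t s
    simp only [indicator_apply, mem_Ioc, R, mem_ofPred_eq, Function.uncurry_apply_pair]
    split_ifs <;> first | rfl | (exfalso; grind)
  have h_snd : ∀ t s, R.indicator (Function.uncurry F) (t, s)
      = (Ioc a b).indicator (fun s => (Icc s b).indicator (fun t => F t s) t) s := by
    intro t s
    simp only [indicator_apply, mem_Ioc, mem_Icc, R, mem_ofPred_eq, Function.uncurry_apply_pair]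
    split_ifs <;> first | rfl | (exfalso; grind)
  calc ∫⁻ t in Ioc a b, ∫⁻ s in Ioc a t, F t s
      = ∫⁻ t, ∫⁻ s, R.indicator (Function.uncurry F) (t, s) := by
        simp_rw [h_fst, ← lintegral_indicator measurableSet_Ioc]
        refine lintegral_congr fun t => ?_
        by_cases ht : t ∈ Ioc a b <;> simp [ht]
    _ = ∫⁻ s, ∫⁻ t, R.indicator (Function.uncurry F) (t, s) :=
        lintegral_lintegral_swap (hF.indicator hR).aemeasurable
    _ = ∫⁻ s in Ioc a b, ∫⁻ t in Icc s b, F t s := by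
        simp_rw [h_snd, ← lintegral_indicator measurableSet_Icc,
          ← lintegral_indicator measurableSet_Ioc]
        refine lintegral_congr fun s => ?_
        by_cases hs : s ∈ Ioc a b <;> simp [hs]

theorem setLIntegral_Icc_comp_sub_le (s b : ℝ) (K : ℝ → ℝ≥0∞) :
    ∫⁻ t in Icc s b, K (t - s) ≤ ∫⁻ u in Ici 0, K u := by
  calc ∫⁻ t in Icc s b, K (t - s) ≤ ∫⁻ t in Ici s, K (t - s) :=
        lintegral_mono_set Icc_subset_Ici_self
    _ = ∫⁻ u in Ici 0, K u := by
        simpa using (measurePreserving_sub_right volume s).setLIntegral_comp_preimage_emb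
          (measurableEmbedding_subRight s) K (Ici 0)

theorem ae_eq_zero_of_le_lintegral_convolution {T r : ℝ} (hr : 0 ≤ r) {k G : ℝ → ℝ≥0∞}
    (hk : Measurable k) (hG : Measurable G) (hG_fin : ∫⁻ t in Ioc 0 T, G t ≠ ∞)
    (hk_small : ∫⁻ u in Ici 0, ENNReal.ofReal (Real.exp (-(r * u))) * k u < 1)
    (h : ∀ t ∈ Ioc 0 T, G t ≤ ∫⁻ s in Ioc 0 t, k (t - s) * G s) :
    ∀ᵐ t ∂volume.restrict (Ioc 0 T), G t = 0 := by
  set w : ℝ → ℝ≥0∞ := fun u => ENNReal.ofReal (Real.exp (-(r * u)))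
  have hw_mul : ∀ t s, w t = w (t - s) * w s := fun t s => by
    simp only [w, ← ENNReal.ofReal_mul (Real.exp_pos _).le, ← Real.exp_add]
    ring_nf
  have hw_pos : ∀ t, w t ≠ 0 := fun t => ENNReal.ofReal_ne_zero_iff.mpr (Real.exp_pos _)
  set W := ∫⁻ t in Ioc 0 T, w t * G t
  have hW_fin : W ≠ ∞ := by
    refine ne_top_of_le_ne_top hG_fin (setLIntegral_mono hG fun t ht => ?_)
    refine mul_le_of_le_one_left zero_le (ENNReal.ofReal_le_one.mpr ?_)
    exact Real.exp_le_one_iff.mpr (by nlinarith [ht.1])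
  have hW : W ≤ (∫⁻ u in Ici 0, w u * k u) * W := by
    calc W ≤ ∫⁻ t in Ioc 0 T, w t * ∫⁻ s in Ioc 0 t, k (t - s) * G s :=
          setLIntegral_mono' measurableSet_Ioc fun t ht => mul_le_mul_right (h t ht) _
      _ = ∫⁻ t in Ioc 0 T, ∫⁻ s in Ioc 0 t, w (t - s) * k (t - s) * (w s * G s) := by
          refine lintegral_congr fun t => ?_
          rw [← lintegral_const_mul' _ _ ENNReal.ofReal_ne_top]
          refine lintegral_congr fun s => ?_
          change w t * _ = _
          rw [hw_mul t s]; ring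
      _ = ∫⁻ s in Ioc 0 T, ∫⁻ t in Icc s T, w (t - s) * k (t - s) * (w s * G s) :=
          lintegral_Ioc_lintegral_Ioc_swap 0 T (by fun_prop)
      _ = ∫⁻ s in Ioc 0 T, (∫⁻ t in Icc s T, w (t - s) * k (t - s)) * (w s * G s) := by
          refine lintegral_congr fun s => ?_
          exact lintegral_mul_const _ (by fun_prop)
      _ ≤ ∫⁻ s in Ioc 0 T, (∫⁻ u in Ici 0, w u * k u) * (w s * G s) :=
          lintegral_mono fun s => mul_le_mul_left (setLIntegral_Icc_comp_sub_le s T _) _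
      _ = (∫⁻ u in Ici 0, w u * k u) * W := lintegral_const_mul _ (by fun_prop)
  have hW0 : W = 0 := ENNReal.eq_zero_of_le_mul_of_lt_one hW hk_small hW_fin
  filter_upwards [(lintegral_eq_zero_iff (by fun_prop)).mp hW0] with t ht
  exact (mul_eq_zero.mp ht).resolve_left (hw_pos t)

theorem lintegral_Ici_exp_mul_rpow {r a : ℝ} (hr : 0 < r) (ha : 0 < a) :
    ∫⁻ u in Ici 0, ENNReal.ofReal (Real.exp (-(r * u))) * ENNReal.ofReal (u ^ (a - 1))
      = ENNReal.ofReal ((1 / r) ^ a * Real.Gamma a) := by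
  have h_int : ∫ u in Ioi 0, u ^ (a - 1) * Real.exp (-(r * u)) = (1 / r) ^ a * Real.Gamma a :=
    Real.integral_rpow_mul_exp_neg_mul_Ioi ha hr
  have h_integrable : IntegrableOn (fun u => u ^ (a - 1) * Real.exp (-(r * u))) (Ioi 0) :=
    -- the integral of a non-integrable function is `0`
    .of_integral_ne_zero (by rw [h_int]; positivity)
  rw [setLIntegral_congr Ioi_ae_eq_Ici.symm, ← h_int,
    ofReal_integral_eq_lintegral_ofReal h_integrable]
  · refine setLIntegral_congr_fun measurableSet_Ioi fun u hu => ?_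
    rw [← ENNReal.ofReal_mul (Real.exp_pos _).le, mul_comm]
  · exact (ae_restrict_iff' measurableSet_Ioi).mpr
      (ae_of_all _ fun u hu => mul_nonneg (Real.rpow_nonneg (le_of_lt hu) _) (Real.exp_pos _).le)

theorem exists_lintegral_exp_mul_singular_kernel_lt_one {C κ : ℝ} (hC : 0 ≤ C) (hκ : κ < 1) :
    ∃ r, 0 ≤ r ∧ ∫⁻ u in Ici 0, ENNReal.ofReal (Real.exp (-(r * u)))
      * (ENNReal.ofReal C * ENNReal.ofReal (u ^ (-κ))) < 1 := by
  have ha : 0 < 1 - κ := by linarith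
  have h_lim :
      Tendsto (fun r : ℝ => C * ((1 / r) ^ (1 - κ) * Real.Gamma (1 - κ))) atTop (nhds 0) := by
    have := ((tendsto_rpow_neg_atTop ha).mul_const (Real.Gamma (1 - κ))).const_mul C
    rw [zero_mul, mul_zero] at this
    refine this.congr' ?_
    filter_upwards [eventually_gt_atTop 0] with r hr
    rw [one_div, Real.inv_rpow hr.le, Real.rpow_neg hr.le]
  obtain ⟨r, hr_small, hr_pos⟩ :=
    ((h_lim.eventually (gt_mem_nhds one_pos)).and (eventually_gt_atTop 0)).exists
  refine ⟨r, hr_pos.le, ?_⟩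
  simp_rw [mul_left_comm (ENNReal.ofReal _) (ENNReal.ofReal C)]
  rw [lintegral_const_mul' _ _ ENNReal.ofReal_ne_top, ← sub_sub_cancel_left 1 κ,
    lintegral_Ici_exp_mul_rpow hr_pos ha, ← ENNReal.ofReal_mul hC]
  exact ENNReal.ofReal_lt_one.mpr hr_small

theorem ofReal_mul_intervalIntegral_le_lintegral {t : ℝ} (ht : 0 ≤ t) {C : ℝ} (hC : 0 ≤ C)
    (κ : ℝ) (g : ℝ → ℝ) :
    ENNReal.ofReal (C * ∫ s in (0 : ℝ)..t, (t - s) ^ (-κ) * g s)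
      ≤ ∫⁻ s in Ioc 0 t,
          ENNReal.ofReal C * ENNReal.ofReal ((t - s) ^ (-κ)) * ENNReal.ofReal (g s) := by
  calc ENNReal.ofReal (C * ∫ s in (0 : ℝ)..t, (t - s) ^ (-κ) * g s)
      = ENNReal.ofReal C * ENNReal.ofReal (∫ s in Ioc 0 t, (t - s) ^ (-κ) * g s) := by
        rw [intervalIntegral.integral_of_le ht, ENNReal.ofReal_mul hC]
    _ ≤ ENNReal.ofReal C * ∫⁻ s in Ioc 0 t, ENNReal.ofReal ((t - s) ^ (-κ) * g s) :=
        mul_le_mul_right (ofReal_integral_le_lintegral_ofReal _) _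
    _ = _ := by
        rw [← lintegral_const_mul' _ _ ENNReal.ofReal_ne_top]
        refine setLIntegral_congr_fun measurableSet_Ioc fun s hs => ?_
        rw [ENNReal.ofReal_mul (Real.rpow_nonneg (sub_nonneg.2 hs.2) _), mul_assoc]

theorem ae_eq_zero_of_le_singular_integral {T C κ : ℝ} (hC : 0 ≤ C) (hκ : κ < 1) {g : ℝ → ℝ}
    (hg : Measurable g) (hg_nonneg : ∀ t ∈ Ioc 0 T, 0 ≤ g t) (hg_int : IntegrableOn g (Ioc 0 T))
    (h : ∀ t ∈ Ioc 0 T, g t ≤ C * ∫ s in (0 : ℝ)..t, (t - s) ^ (-κ) * g s) :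
    g =ᵐ[volume.restrict (Ioc 0 T)] 0 := by
  obtain ⟨r, hr, h_small⟩ := exists_lintegral_exp_mul_singular_kernel_lt_one hC hκ
  have h_fin : ∫⁻ t in Ioc 0 T, ENNReal.ofReal (g t) ≠ ∞ :=
    ne_top_of_le_ne_top hg_int.2.ne (lintegral_mono fun t => Real.ofReal_le_enorm _)
  have h_ennreal : ∀ t ∈ Ioc 0 T, ENNReal.ofReal (g t) ≤
      ∫⁻ s in Ioc 0 t,
        ENNReal.ofReal C * ENNReal.ofReal ((t - s) ^ (-κ)) * ENNReal.ofReal (g s) :=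
    fun t ht => (ENNReal.ofReal_le_ofReal (h t ht)).trans
      (ofReal_mul_intervalIntegral_le_lintegral ht.1.le hC κ g)
  filter_upwards [ae_restrict_mem measurableSet_Ioc, ae_eq_zero_of_le_lintegral_convolution hr
    (by fun_prop) hg.ennreal_ofReal h_fin h_small h_ennreal] with t ht h_zero
  exact le_antisymm (ENNReal.ofReal_eq_zero.mp h_zero) (hg_nonneg t ht)

theorem stmt18_general (T C κ : ℝ) (hC : 0 < C) (hκ : κ ∈ Set.Ioo (0 : ℝ) 1)
    (f : ℕ → ℝ → ℝ) (hmeas : ∀ n, Measurable (f n))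
    (hnn : ∀ n, ∀ t ∈ Set.Icc (0 : ℝ) T, 0 ≤ f n t)
    (φ : ℝ → ℝ) (hφ : MeasureTheory.IntegrableOn φ (Set.Icc (0 : ℝ) T))
    (hb : ∀ n, ∀ t ∈ Set.Icc (0 : ℝ) T, f n t ≤ φ t)
    (h : ∀ t ∈ Set.Icc (0 : ℝ) T, limsup (fun n => f n t) atTop
        ≤ C * ∫ s in (0 : ℝ)..t, (t - s) ^ (-κ) * limsup (fun n => f n s) atTop) :
    ∀ t ∈ Set.Icc (0 : ℝ) T, limsup (fun n => f n t) atTop = 0 := by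
  set g : ℝ → ℝ := fun t => limsup (fun n => f n t) atTop
  have hg_mem : ∀ t ∈ Icc 0 T, g t ∈ Icc 0 (φ t) :=
    fun t ht => limsup_mem_Icc_of_forall_mem_Icc fun n => ⟨hnn n t ht, hb n t ht⟩
  have hg_int : IntegrableOn g (Ioc 0 T) :=
    (hφ.mono_set Ioc_subset_Icc_self).mono' (Measurable.limsup hmeas).aestronglyMeasurable
      (ae_restrict_of_forall_mem measurableSet_Ioc fun t ht => by
        obtain ⟨h0, hφt⟩ := hg_mem t (Ioc_subset_Icc_self ht)
        rwa [Real.norm_of_nonneg h0])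
  have hg_zero : g =ᵐ[volume.restrict (Ioc 0 T)] 0 :=
    ae_eq_zero_of_le_singular_integral hC.le hκ.2 (Measurable.limsup hmeas)
      (fun t ht => (hg_mem t (Ioc_subset_Icc_self ht)).1) hg_int
      (fun t ht => h t (Ioc_subset_Icc_self ht))
  intro t ht
  have h_int_zero : ∫ s in (0 : ℝ)..t, (t - s) ^ (-κ) * g s = 0 := by
    rw [intervalIntegral.integral_of_le ht.1]
    refine integral_eq_zero_of_ae ?_
    filter_upwards [ae_restrict_of_ae_restrict_of_subset (Ioc_subset_Ioc_right ht.2) hg_zero]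
      with s hs
    simp [hs]
  have h_le : g t ≤ C * ∫ s in (0 : ℝ)..t, (t - s) ^ (-κ) * g s := h t ht
  rw [h_int_zero, mul_zero] at h_le
  exact le_antisymm h_le (hg_mem t ht).1

/-- Singular Gronwall lemma with limsup: if the nonnegative measurable functions `f n` are
uniformly dominated by an integrable function and
`limsup_n f_n(t) ≤ C ∫_0^t (t−s)^{-κ} limsup_n f_n(s) ds` on `[0,T]` with `κ ∈ (0,1)`,
then `limsup_n f_n(t) = 0` on `[0,T]`. -/
theorem stmt18 (T C κ : ℝ) (hT : 0 < T) (hC : 0 < C) (hκ : κ ∈ Set.Ioo (0 : ℝ) 1)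
    (f : ℕ → ℝ → ℝ) (hmeas : ∀ n, Measurable (f n))
    (hnn : ∀ n, ∀ t ∈ Set.Icc (0 : ℝ) T, 0 ≤ f n t)
    (φ : ℝ → ℝ) (hφ : MeasureTheory.IntegrableOn φ (Set.Icc (0 : ℝ) T))
    (hb : ∀ n, ∀ t ∈ Set.Icc (0 : ℝ) T, f n t ≤ φ t)
    (h : ∀ t ∈ Set.Icc (0 : ℝ) T, limsup (fun n => f n t) atTop
        ≤ C * ∫ s in (0 : ℝ)..t, (t - s) ^ (-κ) * limsup (fun n => f n s) atTop) :
    ∀ t ∈ Set.Icc (0 : ℝ) T, limsup (fun n => f n t) atTop = 0 :=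
  stmt18_general T C κ hC hκ f hmeas hnn φ hφ hb h
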